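/- arXiv:1705.08076 — 5 statements merged into one kernel-verified Lean document; each statement's English description precedes it below -/
import Mathlib

section
/- Under the 'largest' expert policy, the conditional expectation of the updated threshold satisfies E[V_{t+1} | V_t = v_t] = v_t − (1 − (1−v_t)^c · (1 + c·v_t))/(c+1). -/
/-!
Since `0 ≤ V ≤ v`, the layer-cake formula gives `E[V] = ∫₀^v P(V > t) dt`. For `t < v`, the
event `V > t` is the disjoint union of "every point is `≥ v`" and "some point lies in `(t, v)`", whose
probabilities under independence are `(1 - v)^c` and `1 - (1 - (v - t))^c`; integrating these
over `[0, v]` gives the closed form.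
-/

open MeasureTheory Set
open scoped Classical

noncomputable def largestBelow {ι : Type*} (v : ℝ) (x : ι → ℝ) : ℝ :=
  if ∀ i, v ≤ x i then v else sSup {y | ∃ i, x i = y ∧ y < v}

section largestBelow

variable {ι : Type*} {v : ℝ}

theorem lt_largestBelow_iff [Finite ι] (x : ι → ℝ) (t : ℝ) :
    t < largestBelow v x ↔ (t < v ∧ ∀ i, v ≤ x i) ∨ ∃ i, x i ∈ Ioo t v := by
  unfold largestBelow
  split_ifs with h
  · simp only [h, implies_true, and_true, mem_Ioo]
    exact ⟨Or.inl, fun h' => h'.elim id fun ⟨i, hi⟩ => absurd (h i) (not_le.2 hi.2)⟩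
  · obtain ⟨j, hj⟩ := not_forall.1 h
    have hfin : {y | ∃ i, x i = y ∧ y < v}.Finite :=
      (finite_range x).subset fun y ⟨i, hi, _⟩ => ⟨i, hi⟩
    rw [lt_csSup_iff hfin.bddAbove ⟨x j, j, rfl, not_le.1 hj⟩]
    simp only [h, and_false, false_or, mem_ofPred_eq, mem_Ioo]
    constructor
    · rintro ⟨_, ⟨i, rfl, hi⟩, ht⟩
      exact ⟨i, ht, hi⟩
    · rintro ⟨i, ht, hi⟩
      exact ⟨x i, ⟨i, rfl, hi⟩, ht⟩

theorem largestBelow_le [Finite ι] (x : ι → ℝ) : largestBelow v x ≤ v :=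
  not_lt.1 fun h => by simpa using (lt_largestBelow_iff x v).1 h

theorem largestBelow_nonneg (hv : 0 ≤ v) {x : ι → ℝ} (hx : ∀ i, 0 ≤ x i) :
    0 ≤ largestBelow v x := by
  unfold largestBelow
  split_ifs with h
  · exact hv
  · obtain ⟨j, hj⟩ := not_forall.1 h
    exact (hx j).trans (le_csSup ⟨v, fun y ⟨_, _, hy⟩ => hy.le⟩ ⟨j, rfl, not_le.1 hj⟩)

theorem measurable_largestBelow [Finite ι] :
    Measurable (largestBelow (ι := ι) v) := by
  refine measurable_of_Ioi fun t => ?_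
  have hpre : largestBelow v ⁻¹' Ioi t =
      {x : ι → ℝ | (t < v ∧ ∀ i, v ≤ x i) ∨ ∃ i, x i ∈ Ioo t v} := by
    ext x; exact lt_largestBelow_iff x t
  rw [hpre]
  measurability

end largestBelow

section tail

variable {ι : Type*} [Fintype ι] {μ : Measure ℝ} [IsProbabilityMeasure μ] {v : ℝ}

theorem measureReal_pi_univ_pi_const (s : Set ℝ) :
    (Measure.pi fun _ : ι => μ).real (univ.pi fun _ => s) = μ.real s ^ Fintype.card ι := by
  simp [measureReal_def, Measure.pi_pi]

theorem measureReal_lt_largestBelow {t : ℝ} (ht : t < v) :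
    (Measure.pi fun _ : ι => μ).real {x | t < largestBelow v x} =
      μ.real (Ici v) ^ Fintype.card ι + (1 - (1 - μ.real (Ioo t v)) ^ Fintype.card ι) := by
  have hsplit : {x | t < largestBelow v x} =
      (univ.pi fun _ : ι => Ici v) ∪ (univ.pi fun _ : ι => (Ioo t v)ᶜ)ᶜ := by
    ext x
    simp only [mem_ofPred_eq, lt_largestBelow_iff, ht, true_and, mem_union, mem_pi, mem_univ,
      forall_const, mem_Ici, mem_compl_iff, not_forall, not_not]
  have hdisj : Disjoint (univ.pi fun _ : ι => Ici v) (univ.pi fun _ : ι => (Ioo t v)ᶜ)ᶜ := by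
    rw [disjoint_compl_right_iff_subset]
    exact pi_mono fun _ _ y (hy : v ≤ y) hy' => not_lt.2 hy hy'.2
  have hmeas : MeasurableSet (univ.pi fun _ : ι => (Ioo t v)ᶜ) :=
    .univ_pi fun _ => measurableSet_Ioo.compl
  rw [hsplit, measureReal_union hdisj hmeas.compl, probReal_compl_eq_one_sub hmeas,
    measureReal_pi_univ_pi_const, measureReal_pi_univ_pi_const,
    probReal_compl_eq_one_sub measurableSet_Ioo]

theorem integral_largestBelow_pi (hv : 0 ≤ v) (hμ : ∀ᵐ y ∂μ, 0 ≤ y) :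
    ∫ x, largestBelow v x ∂(Measure.pi fun _ : ι => μ) =
      ∫ t in 0..v,
        μ.real (Ici v) ^ Fintype.card ι + (1 - (1 - μ.real (Ioo t v)) ^ Fintype.card ι) := by
  set P := Measure.pi fun _ : ι => μ
  have hnonneg : 0 ≤ᵐ[P] largestBelow v := by
    filter_upwards [ae_all_iff.2 fun i => Measure.tendsto_eval_ae_ae (i := i) hμ] with x hx
    exact largestBelow_nonneg hv hx
  have hint : Integrable (largestBelow v) P := by
    refine .of_bound measurable_largestBelow.aestronglyMeasurable v ?_
    filter_upwards [hnonneg] with x hx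
    rw [Real.norm_of_nonneg hx]
    exact largestBelow_le x
  have htail : EqOn (fun t => P.real {x | t < largestBelow v x})
      ((Ioo 0 v).indicator fun t =>
        μ.real (Ici v) ^ Fintype.card ι + (1 - (1 - μ.real (Ioo t v)) ^ Fintype.card ι))
      (Ioi 0) := by
    intro t (ht : 0 < t)
    dsimp only
    by_cases htv : t < v
    · rw [indicator_of_mem (show t ∈ Ioo 0 v from ⟨ht, htv⟩)]
      exact measureReal_lt_largestBelow htv
    · have hempty : {x : ι → ℝ | t < largestBelow v x} = ∅ :=
        eq_empty_of_forall_notMem fun x (hx : t < largestBelow v x) =>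
          htv (hx.trans_le (largestBelow_le x))
      rw [indicator_of_notMem fun h => htv h.2, hempty, measureReal_empty]
  rw [hint.integral_eq_integral_meas_lt hnonneg, setIntegral_congr_fun measurableSet_Ioi htail,
    integral_indicator measurableSet_Ioo, Measure.restrict_restrict measurableSet_Ioo,
    inter_eq_left.2 Ioo_subset_Ioi_self, ← integral_Ioc_eq_integral_Ioo,
    intervalIntegral.integral_of_le hv]

end tail

instance Real.isProbabilityMeasure_restrict_Icc_zero_one :
    IsProbabilityMeasure (volume.restrict (Icc (0 : ℝ) 1)) :=
  ⟨by simp [Real.volume_Icc]⟩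

theorem measureReal_restrict_Icc_zero_one_Ici {v : ℝ} (hv : v ∈ Icc (0 : ℝ) 1) :
    (volume.restrict (Icc (0 : ℝ) 1)).real (Ici v) = 1 - v := by
  have hinter : Ici v ∩ Icc 0 1 = Icc v 1 := by
    ext y
    simp only [mem_inter_iff, mem_Ici, mem_Icc]
    exact ⟨fun h => ⟨h.1, h.2.2⟩, fun h => ⟨h.1, hv.1.trans h.1, h.2⟩⟩
  rw [measureReal_restrict_apply measurableSet_Ici, hinter, Real.volume_real_Icc,
    max_eq_left (sub_nonneg.2 hv.2)]

theorem measureReal_restrict_Icc_zero_one_Ioo {t v : ℝ} (ht : 0 ≤ t) (htv : t ≤ v)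
    (hv : v ≤ 1) :
    (volume.restrict (Icc (0 : ℝ) 1)).real (Ioo t v) = v - t := by
  rw [measureReal_restrict_apply measurableSet_Ioo,
    inter_eq_left.2 (Ioo_subset_Icc_self.trans (Icc_subset_Icc ht hv)), Real.volume_real_Ioo,
    max_eq_left (sub_nonneg.2 htv)]

theorem integral_tail_largestBelow_uniform (v : ℝ) (n : ℕ) :
    ∫ t in (0 : ℝ)..v, ((1 - v) ^ n + (1 - (1 - (v - t)) ^ n)) =
      v - (1 - (1 - v) ^ n * (1 + n * v)) / (n + 1) := by
  have hshift : ∫ t in (0 : ℝ)..v, (1 - (v - t)) ^ n = ∫ u in (1 - v)..1, u ^ n := by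
    calc _ = ∫ t in (0 : ℝ)..v, (t + (1 - v)) ^ n := by congr 1; ext t; ring_nf
      _ = _ := by rw [intervalIntegral.integral_comp_add_right (· ^ n), zero_add, add_sub_cancel]
  rw [intervalIntegral.integral_add intervalIntegrable_const
      (Continuous.intervalIntegrable (by fun_prop) _ _),
    intervalIntegral.integral_sub intervalIntegrable_const
      (Continuous.intervalIntegrable (by fun_prop) _ _), hshift, integral_pow]
  simp only [intervalIntegral.integral_const, sub_zero, smul_eq_mul, mul_one, one_pow]
  field_simp
  ring

theorem expected_update_largest_policy_general
    (c : ℕ) (vt : ℝ) (hvt : vt ∈ Set.Icc (0 : ℝ) 1) :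
    let P : Measure (Fin c → ℝ) :=
      Measure.pi fun _ => volume.restrict (Set.Icc (0 : ℝ) 1)
    let V : (Fin c → ℝ) → ℝ := fun x =>
      if ∀ i, vt ≤ x i then vt else sSup {y | ∃ i, x i = y ∧ y < vt}
    ∫ x, V x ∂P = vt - (1 - (1 - vt) ^ c * (1 + c * vt)) / (c + 1) := by
  intro P V
  have hV : V = largestBelow vt := by
    funext x
    unfold V largestBelow
    -- the two `if`s differ only in their `Decidable` instances
    congr
  have hμ : ∀ᵐ y ∂(volume.restrict (Icc (0 : ℝ) 1)), 0 ≤ y :=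
    (ae_restrict_mem measurableSet_Icc).mono fun _ hy => hy.1
  rw [hV, integral_largestBelow_pi hvt.1 hμ, Fintype.card_fin,
    ← integral_tail_largestBelow_uniform]
  refine intervalIntegral.integral_congr fun t ht => ?_
  rw [uIcc_of_le hvt.1] at ht
  simp only [measureReal_restrict_Icc_zero_one_Ici hvt,
    measureReal_restrict_Icc_zero_one_Ioo ht.1 ht.2 hvt.2]

/-- under the "largest" expert policy, with `c` points drawn
i.i.d. uniformly from `[0,1]`, the expected updated threshold is
`v_t − (1 − (1−v_t)^c (1 + c v_t))/(c+1)`. -/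
theorem expected_update_largest_policy
    (c : ℕ) (hc : 0 < c) (vt : ℝ) (hvt : vt ∈ Set.Icc (0 : ℝ) 1) :
    let P : Measure (Fin c → ℝ) :=
      Measure.pi fun _ => volume.restrict (Set.Icc (0 : ℝ) 1)
    let V : (Fin c → ℝ) → ℝ := fun x =>
      if ∀ i, vt ≤ x i then vt else sSup {y | ∃ i, x i = y ∧ y < vt}
    ∫ x, V x ∂P = vt - (1 - (1 - vt) ^ c * (1 + c * vt)) / (c + 1) :=
  expected_update_largest_policy_general c vt hvt
end

section
/- Under the 'smallest' expert policy, the conditional expectation of the updated threshold satisfies E[V_{t+1} | V_t = v_t] = (1 − (1−v_t)^{c+1})/(c+1). -/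
/-!
The updated threshold lies in `[0, v]`, and for `t ≤ v` it is at least `t` exactly when every
drawn point is at least `t`, an event of probability `(1 - t) ^ c`. The layer-cake formula then
gives `E[V] = ∫₀^v (1 - t) ^ c dt = (1 - (1 - v) ^ (c + 1)) / (c + 1)`.
-/

open MeasureTheory Set

section SmallestBelow

variable {ι : Type*} [Fintype ι]

/-- `V_{t+1}` as a function of the threshold `v = v_t` and the drawn points `x`. -/
noncomputable def smallestBelow (v : ℝ) (x : ι → ℝ) : ℝ :=
  if ∀ i, v ≤ x i then v else sInf {y | ∃ i, x i = y ∧ y < v}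

lemma bddBelow_coords_lt (v : ℝ) (x : ι → ℝ) : BddBelow {y | ∃ i, x i = y ∧ y < v} :=
  Finite.bddBelow <| (finite_range x).subset <| by
    rintro _ ⟨i, rfl, -⟩
    exact mem_range_self i

lemma smallestBelow_le (v : ℝ) (x : ι → ℝ) : smallestBelow v x ≤ v := by
  unfold smallestBelow
  split_ifs with h
  · exact le_rfl
  · push Not at h
    obtain ⟨i, hi⟩ := h
    exact (csInf_le (bddBelow_coords_lt v x) ⟨i, rfl, hi⟩).trans hi.le

lemma le_smallestBelow_iff {t v : ℝ} (ht : t ≤ v) (x : ι → ℝ) :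
    t ≤ smallestBelow v x ↔ ∀ i, t ≤ x i := by
  unfold smallestBelow
  split_ifs with h
  · exact iff_of_true ht fun i => ht.trans (h i)
  · push Not at h
    obtain ⟨i₀, hi₀⟩ := h
    rw [le_csInf_iff (bddBelow_coords_lt v x) ⟨x i₀, i₀, rfl, hi₀⟩]
    refine ⟨fun hS i => ?_, fun hx => ?_⟩
    · rcases lt_or_ge (x i) v with hi | hi
      · exact hS _ ⟨i, rfl, hi⟩
      · exact ht.trans hi
    · rintro _ ⟨i, rfl, -⟩
      exact hx i

lemma smallestBelow_nonneg {v : ℝ} (hv : 0 ≤ v) {x : ι → ℝ} (hx : ∀ i, 0 ≤ x i) :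
    0 ≤ smallestBelow v x :=
  (le_smallestBelow_iff hv x).2 hx

lemma measurable_smallestBelow (v : ℝ) : Measurable (smallestBelow (ι := ι) v) := by
  refine measurable_of_Ici fun t => ?_
  rcases le_or_gt t v with ht | ht
  · have hpre : smallestBelow (ι := ι) v ⁻¹' Ici t = univ.pi fun _ => Ici t := by
      ext x
      simp only [mem_preimage, mem_Ici, mem_univ_pi, le_smallestBelow_iff ht]
    rw [hpre]
    exact MeasurableSet.univ_pi fun _ => measurableSet_Ici
  · have hpre : smallestBelow (ι := ι) v ⁻¹' Ici t = ∅ :=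
      eq_empty_of_forall_notMem fun x hx => (hx.trans (smallestBelow_le v x)).not_gt ht
    rw [hpre]
    exact MeasurableSet.empty

end SmallestBelow

section UniformCube

variable (ι : Type*) [Fintype ι]

lemma ae_nonneg_pi_uniform :
    ∀ᵐ x ∂Measure.pi (fun _ : ι => volume.restrict (Icc (0 : ℝ) 1)), ∀ i, 0 ≤ x i :=
  Filter.eventually_all.2 fun _ =>
    Measure.tendsto_eval_ae_ae.eventually ((ae_restrict_mem measurableSet_Icc).mono fun _ hy => hy.1)

lemma measureReal_pi_uniform_Ici {t : ℝ} (ht₀ : 0 ≤ t) (ht₁ : t ≤ 1) :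
    (Measure.pi fun _ : ι => volume.restrict (Icc (0 : ℝ) 1)).real (univ.pi fun _ => Ici t) =
      (1 - t) ^ Fintype.card ι := by
  have hIci : volume.restrict (Icc (0 : ℝ) 1) (Ici t) = ENNReal.ofReal (1 - t) := by
    have hinter : Ici t ∩ Icc 0 1 = Icc t 1 := by
      ext y
      simp only [mem_inter_iff, mem_Ici, mem_Icc]
      exact ⟨fun h => ⟨h.1, h.2.2⟩, fun h => ⟨h.1, ht₀.trans h.1, h.2⟩⟩
    rw [Measure.restrict_apply measurableSet_Ici, hinter, Real.volume_Icc]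
  rw [measureReal_def, Measure.pi_pi, Finset.prod_const, hIci, Finset.card_univ,
    ← ENNReal.ofReal_pow (by linarith), ENNReal.toReal_ofReal (pow_nonneg (by linarith) _)]

end UniformCube

lemma integral_one_sub_pow (c : ℕ) (v : ℝ) :
    ∫ t in (0 : ℝ)..v, (1 - t) ^ c = (1 - (1 - v) ^ (c + 1)) / (c + 1) := by
  rw [intervalIntegral.integral_comp_sub_left (fun y : ℝ => y ^ c) 1, integral_pow]
  norm_num

theorem expected_update_smallest_policy_general
    (c : ℕ) (vt : ℝ) (hvt : vt ∈ Set.Icc (0 : ℝ) 1) :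
    let P : Measure (Fin c → ℝ) :=
      Measure.pi fun _ => volume.restrict (Set.Icc (0 : ℝ) 1)
    let V : (Fin c → ℝ) → ℝ := fun x =>
      if ∀ i, vt ≤ x i then vt else sInf {y | ∃ i, x i = y ∧ y < vt}
    ∫ x, V x ∂P = (1 - (1 - vt) ^ (c + 1)) / (c + 1) := by
  intro P V
  obtain ⟨hvt₀, hvt₁⟩ := hvt
  have hV : V = smallestBelow vt := funext fun x => by
    simp only [V, smallestBelow]
    -- the two sides decide `∀ i` by different (subsingleton) instances
    congr
  rw [hV]
  have hV_mem : ∀ᵐ x ∂P, smallestBelow vt x ∈ Icc 0 vt :=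
    (ae_nonneg_pi_uniform (Fin c)).mono fun x hx =>
      ⟨smallestBelow_nonneg hvt₀ hx, smallestBelow_le vt x⟩
  have hV_int : Integrable (smallestBelow vt) P :=
    .of_mem_Icc 0 vt (measurable_smallestBelow vt).aemeasurable hV_mem
  rw [hV_int.integral_eq_integral_Ioc_meas_le (M := vt) (hV_mem.mono fun _ h => h.1)
      (hV_mem.mono fun _ h => h.2), ← integral_one_sub_pow c vt,
    intervalIntegral.integral_of_le hvt₀]
  refine setIntegral_congr_fun measurableSet_Ioc fun t ht => ?_
  have hpre : {x : Fin c → ℝ | t ≤ smallestBelow vt x} = univ.pi fun _ => Ici t := by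
    ext x
    simp only [mem_ofPred_eq, mem_univ_pi, mem_Ici, le_smallestBelow_iff ht.2]
  rw [hpre, measureReal_pi_uniform_Ici (Fin c) ht.1.le (ht.2.trans hvt₁), Fintype.card_fin]

/-- under the "smallest" expert policy, with `c` points drawn
i.i.d. uniformly from `[0,1]`, the expected updated threshold is
`(1 − (1−v_t)^{c+1})/(c+1)`. -/
theorem expected_update_smallest_policy
    (c : ℕ) (hc : 0 < c) (vt : ℝ) (hvt : vt ∈ Set.Icc (0 : ℝ) 1) :
    let P : Measure (Fin c → ℝ) :=
      Measure.pi fun _ => volume.restrict (Set.Icc (0 : ℝ) 1)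
    let V : (Fin c → ℝ) → ℝ := fun x =>
      if ∀ i, vt ≤ x i then vt else sInf {y | ∃ i, x i = y ∧ y < vt}
    ∫ x, V x ∂P = (1 - (1 - vt) ^ (c + 1)) / (c + 1) :=
  expected_update_smallest_policy_general c vt hvt
end

section
/- For all v ∈ (0,1] and all integers c ≥ 1, the expected reduction under the 'smallest' policy with c points is at least the expected reduction with a single point: v − (1 − (1−v)^{c+1})/(c+1) ≥ v²/2. -/
/-! With `n = c + 1` the claim is the second-order Bernoulli inequality
`(1 - v) ^ n ≥ 1 - n v + n v² / 2` for `v ≤ 1`, `n ≥ 2`. It is an identity at `n = 2`, and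
multiplying by `1 - v ≥ 0` propagates it from `n` to `n + 1` with the nonnegative slack
`v² (n (1 - v) + n - 1) / 2`. -/

theorem one_sub_mul_add_mul_sq_div_two_le_one_sub_pow {α : Type*} [Field α] [LinearOrder α]
    [IsStrictOrderedRing α] {v : α} (hv : v ≤ 1) {n : ℕ} (hn : 2 ≤ n) :
    1 - n * v + n * v ^ 2 / 2 ≤ (1 - v) ^ n := by
  induction n, hn using Nat.le_induction with
  | base => push_cast; linear_combination
  | succ n hn ih =>
    have hn_one : (1 : α) ≤ n := by exact_mod_cast (by omega : 1 ≤ n)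
    have hslack : 0 ≤ v ^ 2 * (n * (1 - v) + (n - 1)) :=
      mul_nonneg (sq_nonneg v) (by nlinarith)
    calc 1 - ↑(n + 1) * v + ↑(n + 1) * v ^ 2 / 2
        ≤ (1 - v) * (1 - n * v + n * v ^ 2 / 2) := by push_cast; linear_combination hslack / 2
      _ ≤ (1 - v) * (1 - v) ^ n := mul_le_mul_of_nonneg_left ih (sub_nonneg.2 hv)
      _ = (1 - v) ^ (n + 1) := (pow_succ' _ _).symm

/-- for `v ∈ (0,1]` and integers `c ≥ 1`, the expected reduction
under the "smallest" policy with `c` points dominates the single-point one: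
`v − (1 − (1−v)^{c+1})/(c+1) ≥ v²/2`. -/
theorem smallest_policy_reduction_ge (v : ℝ) (hv : v ∈ Set.Ioc (0 : ℝ) 1)
    (c : ℕ) (hc : 1 ≤ c) :
    v - (1 - (1 - v) ^ (c + 1)) / (c + 1) ≥ v ^ 2 / 2 := by
  have hbernoulli :=
    one_sub_mul_add_mul_sq_div_two_le_one_sub_pow hv.2 (n := c + 1) (by omega)
  push_cast at hbernoulli
  rw [ge_iff_le, le_sub_comm, div_le_iff₀ (by positivity)]
  linear_combination hbernoulli
end

section
/- Water-filling lemma: Let c ≥ 1, t ≥ 1 be integers, m > 0 a real, and let W : [c] → ℝ≥0 satisfy Σ_j W(j) = (t−1)·m. Then there exist nonnegative reals w(1),...,w(c) with Σ_j w(j) = m such that for every j with w(j) > 0, W(j) + w(j) ≤ t·m/c. -/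
/-! Fill every component up to the common level `T = t·m/c`: the deficits `T - W j` sum to
`c·T - (t-1)·m = m`, so their positive parts carry at least mass `m`. Scaling the positive
parts down by the factor `m / ∑ (T - W j)⁺ ≤ 1` gives an increment of total mass exactly `m`
that never lifts a component above `T`. -/

open Finset

theorem exists_increment_le_level_of_le_sum_posPart {ι : Type*} [Fintype ι] (W : ι → ℝ)
    {T m : ℝ} (hm : 0 ≤ m) (hdeficit : m ≤ ∑ j, (T - W j)⁺) :
    ∃ w : ι → ℝ, (∀ j, 0 ≤ w j) ∧ (∑ j, w j = m) ∧ ∀ j, 0 < w j → W j + w j ≤ T := by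
  set S := ∑ j, (T - W j)⁺
  have hS : 0 ≤ S := sum_nonneg fun j _ => posPart_nonneg _
  have hr : m / S ≤ 1 := div_le_one_of_le₀ hdeficit hS
  refine ⟨fun j => m / S * (T - W j)⁺,
    fun j => mul_nonneg (div_nonneg hm hS) (posPart_nonneg _), ?_, fun j hj => ?_⟩
  · rw [← mul_sum]
    rcases hS.eq_or_lt with hS0 | hSpos
    · rw [← hS0] at hdeficit ⊢
      simp only [div_zero, zero_mul]
      exact (le_antisymm hdeficit hm).symm
    · exact div_mul_cancel₀ m hSpos.ne'
  · have hle : m / S * (T - W j)⁺ ≤ (T - W j) ⊔ 0 :=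
      posPart_def (T - W j) ▸ mul_le_of_le_one_left (posPart_nonneg _) hr
    rcases le_max_iff.mp hle with h | h
    · linarith
    · exact absurd hj h.not_gt

theorem water_filling_general (c t : ℕ) (hc : 1 ≤ c) (m : ℝ) (hm : 0 < m)
    (W : Fin c → ℝ) (hsum : ∑ j, W j = ((t : ℝ) - 1) * m) :
    ∃ w : Fin c → ℝ, (∀ j, 0 ≤ w j) ∧ (∑ j, w j = m) ∧
      ∀ j, 0 < w j → W j + w j ≤ t * m / c := by
  have hc0 : (c : ℝ) ≠ 0 := Nat.cast_ne_zero.mpr (by omega)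
  have hdeficit : ∑ j, (t * m / c - W j) = m := by
    rw [sum_sub_distrib, sum_const, hsum, card_univ, Fintype.card_fin, nsmul_eq_mul]
    field_simp
    ring
  refine exists_increment_le_level_of_le_sum_posPart W hm.le ?_
  calc m = ∑ j, (t * m / c - W j) := hdeficit.symm
    _ ≤ ∑ j, (t * m / c - W j)⁺ := sum_le_sum fun j _ => le_posPart _

/-- water-filling lemma: given cumulative weights `W` on the `c`
components summing to `(t−1)·m`, one can distribute an extra total mass `m`
without pushing any incremented component above `t·m/c`. -/
theorem water_filling (c t : ℕ) (hc : 1 ≤ c) (ht : 1 ≤ t) (m : ℝ) (hm : 0 < m)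
    (W : Fin c → ℝ) (hW : ∀ j, 0 ≤ W j) (hsum : ∑ j, W j = ((t : ℝ) - 1) * m) :
    ∃ w : Fin c → ℝ, (∀ j, 0 ≤ w j) ∧ (∑ j, w j = m) ∧
      ∀ j, 0 < w j → W j + w j ≤ t * m / c :=
  water_filling_general c t hc m hm W hsum
end

section
/- In the repeated-single-query example, if the expert always corrects the largest mislabeled point and the learner always adopts the largest consistent threshold, then after t < c rounds the learner's threshold is (c−t)/c, and hence at least c/2 rounds are required to bring the threshold (and component error) below 1/2. -/
/-! The points at or below the threshold `k / c` form the grid `1/c, …, k/c`, so the largest of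
them is the threshold itself and the learner moves down by exactly one grid step per round:
after `t < c` rounds `c - t` of the `c` points are still mislabeled. -/

open Finset

lemma sSup_grid_le_grid_point {c k : ℕ} (hk : k ∈ Icc 1 c) :
    sSup {x : ℝ | ∃ j ∈ Icc 1 c, x = (j : ℝ) / c ∧ x ≤ k / c} = k / c :=
  IsGreatest.csSup_eq ⟨⟨k, hk, rfl, le_rfl⟩, fun _ ⟨_, _, _, hx⟩ => hx⟩

lemma card_filter_grid_le_grid_point {c k : ℕ} (hc : 0 < c) (hk : k ≤ c) :
    ((Icc 1 c).filter (fun j : ℕ => (j : ℝ) / c ≤ k / c)).card = k := by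
  have hfilter : (Icc 1 c).filter (fun j : ℕ => (j : ℝ) / c ≤ k / c) = Icc 1 k := by
    ext j
    simp only [mem_filter, mem_Icc, div_le_div_iff_of_pos_right (Nat.cast_pos.mpr hc : (0 : ℝ) < c),
      Nat.cast_le]
    omega
  simp [hfilter]

lemma threshold_eq_of_lt {c : ℕ} {v : ℕ → ℝ} (hv0 : v 0 = 1)
    (hrec : ∀ t, v (t + 1) =
      sSup {x : ℝ | ∃ j ∈ Icc 1 c, x = (j : ℝ) / c ∧ x ≤ v t} - 1 / c) :
    ∀ t < c, v t = ((c - t : ℕ) : ℝ) / c := by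
  intro t ht
  induction t with
  | zero =>
    have hc : (c : ℝ) ≠ 0 := by positivity
    simp [hv0, hc]
  | succ t ih =>
    have hmem : c - t ∈ Icc 1 c := mem_Icc.mpr ⟨by omega, by omega⟩
    have hstep : ((c - t : ℕ) : ℝ) = ((c - (t + 1) : ℕ) : ℝ) + 1 := by
      rw [← Nat.cast_succ]; congr 1; omega
    rw [hrec, ih (by omega), sSup_grid_le_grid_point hmem, hstep, add_div, add_sub_cancel_right]

theorem repeated_query_slow_convergence_general
    (c : ℕ) (v : ℕ → ℝ)
    (hv0 : v 0 = 1)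
    (hrec : ∀ t, v (t + 1) =
      sSup {x : ℝ | ∃ j ∈ Finset.Icc 1 c, x = (j : ℝ) / c ∧ x ≤ v t}
        - 1 / c) :
    (∀ t < c, v t = ((c : ℝ) - t) / c) ∧
    ∀ t : ℕ, (t : ℝ) < (c : ℝ) / 2 →
      1 / 2 ≤ v t ∧
      1 / 2 ≤ ((1 : ℝ) / c) *
        ((Finset.Icc 1 c).filter (fun j : ℕ => (j : ℝ) / c ≤ v t)).card := by
  have hthreshold := threshold_eq_of_lt hv0 hrec
  refine ⟨fun t ht => by rw [hthreshold t ht, Nat.cast_sub ht.le], fun t ht => ?_⟩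
  have htc : t < c := by
    have : (t : ℝ) < c := by linarith [(by positivity : (0 : ℝ) ≤ c)]
    exact_mod_cast this
  have hc : (0 : ℝ) < c := by exact_mod_cast (t.zero_le.trans_lt htc)
  have hhalf : (1 : ℝ) / 2 ≤ ((c - t : ℕ) : ℝ) / c := by
    rw [Nat.cast_sub htc.le, le_div_iff₀ hc]
    linarith
  rw [hthreshold t htc, card_filter_grid_le_grid_point (by omega) (Nat.sub_le c t), one_div_mul_eq_div]
  exact ⟨hhalf, hhalf⟩

/-- repeated single query `(1/c, 2/c, …, 1)`, target threshold 0,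
learner starts at threshold 1.  Each round the expert corrects the largest
mislabeled point (the largest point `≤` the current threshold) and the learner
adopts the largest consistent threshold.  Then after `t < c` rounds the
threshold is `(c−t)/c`, and whenever fewer than `c/2` rounds have elapsed both
the threshold and the component error are still at least `1/2`. -/
theorem repeated_query_slow_convergence
    (c : ℕ) (hc : 0 < c) (v : ℕ → ℝ)
    (hv0 : v 0 = 1)
    (hrec : ∀ t, v (t + 1) =
      sSup {x : ℝ | ∃ j ∈ Finset.Icc 1 c, x = (j : ℝ) / c ∧ x ≤ v t}
        - 1 / c) :
    (∀ t < c, v t = ((c : ℝ) - t) / c) ∧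
    ∀ t : ℕ, (t : ℝ) < (c : ℝ) / 2 →
      1 / 2 ≤ v t ∧
      1 / 2 ≤ ((1 : ℝ) / c) *
        ((Finset.Icc 1 c).filter (fun j : ℕ => (j : ℝ) / c ≤ v t)).card :=
  repeated_query_slow_convergence_general c v hv0 hrec
end
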